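/- arXiv:2109.12998 — 2 statements merged into one kernel-verified Lean document; each statement's English description precedes it below -/
import Mathlib

section
/- If f is a rough inclusion function (satisfying R1 and R2) and h is a weak quasi rough inclusion function (satisfying R0 and R3) on (S, P), then the pointwise product f ⊗ h is a rough inclusion function. -/
def IsRIF {S : Type*} (P : S → S → Prop) (κ : S → S → ℝ) : Prop :=
  (∀ a b, κ a b ∈ Set.Icc (0:ℝ) 1) ∧
  (∀ a b, κ a b = 1 ↔ P a b) ∧
  (∀ a b c, κ b c = 1 → κ a b ≤ κ a c)

def IsWqRIF {S : Type*} (P : S → S → Prop) (κ : S → S → ℝ) : Prop :=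
  (∀ a b, κ a b ∈ Set.Icc (0:ℝ) 1) ∧
  (∀ a b, P a b → κ a b = 1) ∧
  (∀ a b c, P b c → κ a b ≤ κ a c)

lemma mul_eq_one_aux {x y : ℝ} (hx : x ∈ Set.Icc (0:ℝ) 1) (hy : y ∈ Set.Icc (0:ℝ) 1)
    (hxy : x * y = 1) : x = 1 ∧ y = 1 := by
  obtain ⟨hx0, hx1⟩ := hx; obtain ⟨hy0, hy1⟩ := hy
  constructor <;> nlinarith

theorem stmt_17 {S : Type*} (P : S → S → Prop) (f h : S → S → ℝ)
    (hf : IsRIF P f) (hh : IsWqRIF P h) :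
    IsRIF P (fun a b => f a b * h a b) := by
  obtain ⟨fb, f1, f2⟩ := hf
  obtain ⟨hb, h0, h3⟩ := hh
  refine ⟨?_, ?_, ?_⟩
  · intro a b
    obtain ⟨hf0, hf1⟩ := fb a b; obtain ⟨hh0, hh1⟩ := hb a b
    exact ⟨mul_nonneg hf0 hh0, by show f a b * h a b ≤ 1; nlinarith⟩
  · intro a b
    constructor
    · intro hp
      exact (f1 a b).mp (mul_eq_one_aux (fb a b) (hb a b) hp).1
    · intro hp
      simp [(f1 a b).mpr hp, h0 a b hp]
  · intro a b c hbc
    obtain ⟨hfe, hhe⟩ := mul_eq_one_aux (fb b c) (hb b c) hbc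
    have hp : P b c := (f1 b c).mp hfe
    have := f2 a b c hfe
    have := h3 a b c hp
    have := (fb a b).1
    have := (hb a b).1
    have := (fb a c).1
    have := (hb a c).1
    show f a b * h a b ≤ f a c * h a c
    nlinarith
end

section
/- If f₁, …, f_n are weak quasi rough inclusion functions, α₁, …, α_n are nonnegative reals with Σ αᵢ = 1, and n₁, …, n_n are positive integers, then Σᵢ αᵢ · fᵢ^{nᵢ} (where f^k denotes the k-fold pointwise product of f with itself) is a weak quasi rough inclusion function. -/
theorem stmt_19 {S : Type*} (P : S → S → Prop) (n : ℕ)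
    (f : Fin n → S → S → ℝ) (hf : ∀ i, IsWqRIF P (f i))
    (α : Fin n → ℝ) (hα : ∀ i, 0 ≤ α i) (hsum : ∑ i, α i = 1)
    (m : Fin n → ℕ) (hm : ∀ i, 0 < m i) :
    IsWqRIF P (fun a b => ∑ i, α i * (f i a b) ^ (m i)) := by
  refine ⟨fun a b => ⟨?_, ?_⟩, fun a b hab => ?_, fun a b c hbc => ?_⟩
  · exact Finset.sum_nonneg fun i _ =>
      mul_nonneg (hα i) (pow_nonneg ((hf i).1 a b).1 _)
  · calc ∑ i, α i * (f i a b) ^ (m i) ≤ ∑ i, α i := by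
          refine Finset.sum_le_sum fun i _ => ?_
          have h1 : (f i a b) ^ (m i) ≤ 1 :=
            pow_le_one₀ ((hf i).1 a b).1 ((hf i).1 a b).2
          nlinarith [hα i]
        _ = 1 := hsum
  · have : ∀ i, α i * (f i a b) ^ (m i) = α i := fun i => by
      rw [(hf i).2.1 a b hab, one_pow, mul_one]
    simp [this, hsum]
  · refine Finset.sum_le_sum fun i _ => ?_
    refine mul_le_mul_of_nonneg_left ?_ (hα i)
    exact pow_le_pow_left₀ ((hf i).1 a b).1 ((hf i).2.2 a b c hbc) _
end
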